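/- Let d = (d_1, …, d_{m+1}) and n = (n_1, …, n_{m+1}) be real vectors, m ≥ 1. Define the m×m lower-triangular Toeplitz matrices D_L, N_L with first columns (d_1,…,d_m) and (n_1,…,n_m), and the m×m upper-triangular Toeplitz matrices D_U, N_U with first rows (d_{m+1}, d_m, …, d_2) and (n_{m+1}, n_m, …, n_2) respectively. Then D_L N_U − N_L D_U = N_U D_L − D_U N_L. -/
import Mathlib

private def GSsig (m i j k : ℕ) : ℕ :=
  if i + j < k then i + j + m - k else if i + j < m + k then i + j - k else i + j - m - k

private lemma GSsig_lt (m i j k : ℕ) (hi : i < m) (hj : j < m) (hk : k < m) :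
    GSsig m i j k < m := by unfold GSsig; split_ifs <;> omega

private lemma GSsig_rel (m i j k : ℕ) (hi : i < m) (hj : j < m) (hk : k < m) :
    k + GSsig m i j k = i + j ∨ k + GSsig m i j k = i + j + m ∨
      k + GSsig m i j k + m = i + j := by
  unfold GSsig; split_ifs <;> omega

private lemma GSsig_sig (m i j k : ℕ) (hi : i < m) (hj : j < m) (hk : k < m) :
    GSsig m i j (GSsig m i j k) = k := by
  unfold GSsig; split_ifs <;> omega

set_option maxHeartbeats 2000000 in
private lemma GSaux (m i j k l : ℕ) (hi : i < m) (hj : j < m) (hk : k < m) (hl : l < m)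
    (hrel : k + l = i + j ∨ k + l = i + j + m ∨ k + l + m = i + j)
    (D N : ℕ → ℝ) :
    ((if k ≤ i then D (i - k) else 0) * (if k ≤ j then N (m + k - j) else 0)
      - (if k ≤ i then N (i - k) else 0) * (if k ≤ j then D (m + k - j) else 0)
      - ((if i ≤ k then N (m + i - k) else 0) * (if j ≤ k then D (k - j) else 0)
        - (if i ≤ k then D (m + i - k) else 0) * (if j ≤ k then N (k - j) else 0)))
    + ((if l ≤ i then D (i - l) else 0) * (if l ≤ j then N (m + l - j) else 0)
      - (if l ≤ i then N (i - l) else 0) * (if l ≤ j then D (m + l - j) else 0)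
      - ((if i ≤ l then N (m + i - l) else 0) * (if j ≤ l then D (l - j) else 0)
        - (if i ≤ l then D (m + i - l) else 0) * (if j ≤ l then N (l - j) else 0))) = 0 := by
  rcases hrel with h | h | h
  · split_ifs <;>
      first
        | (exfalso; omega)
        | (simp only [show i - l = k - j by omega, show m + l - j = m + i - k by omega,
            show l - j = i - k by omega, show m + i - l = m + k - j by omega]; ring)
  · split_ifs <;>
      first
        | (exfalso; omega)
        | (simp only [show m + i - l = k - j by omega, show l - j = m + i - k by omega]; ring)
  · split_ifs <;>
      first
        | (exfalso; omega)
        | (simp only [show i - l = m + k - j by omega, show m + l - j = i - k by omega]; ring)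

theorem gohberg_semencul_commutation (m : ℕ) (hm : 1 ≤ m)
    (d n : Fin (m + 1) → ℝ)
    (DL NL DU NU : Matrix (Fin m) (Fin m) ℝ)
    (hDL : ∀ i j : Fin m, DL i j =
      if h : (j : ℕ) ≤ (i : ℕ) then d ⟨(i : ℕ) - (j : ℕ), by omega⟩ else 0)
    (hNL : ∀ i j : Fin m, NL i j =
      if h : (j : ℕ) ≤ (i : ℕ) then n ⟨(i : ℕ) - (j : ℕ), by omega⟩ else 0)
    (hDU : ∀ i j : Fin m, DU i j =
      if h : (i : ℕ) ≤ (j : ℕ) then d ⟨m + (i : ℕ) - (j : ℕ), by omega⟩ else 0)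
    (hNU : ∀ i j : Fin m, NU i j =
      if h : (i : ℕ) ≤ (j : ℕ) then n ⟨m + (i : ℕ) - (j : ℕ), by omega⟩ else 0) :
    DL * NU - NL * DU = NU * DL - DU * NL := by
  classical
  set D : ℕ → ℝ := fun a => if h : a < m + 1 then d ⟨a, h⟩ else 0 with hD
  set N : ℕ → ℝ := fun a => if h : a < m + 1 then n ⟨a, h⟩ else 0 with hN
  have hDL' : ∀ i j : Fin m, DL i j = if (j : ℕ) ≤ (i : ℕ) then D ((i : ℕ) - j) else 0 := by
    intro i j; rw [hDL i j]; split_ifs with h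
    · simp only [hD]; rw [dif_pos (show (i : ℕ) - (j : ℕ) < m + 1 by omega)]
    · rfl
  have hNL' : ∀ i j : Fin m, NL i j = if (j : ℕ) ≤ (i : ℕ) then N ((i : ℕ) - j) else 0 := by
    intro i j; rw [hNL i j]; split_ifs with h
    · simp only [hN]; rw [dif_pos (show (i : ℕ) - (j : ℕ) < m + 1 by omega)]
    · rfl
  have hDU' : ∀ i j : Fin m, DU i j = if (i : ℕ) ≤ (j : ℕ) then D (m + (i : ℕ) - j) else 0 := by
    intro i j; rw [hDU i j]; split_ifs with h
    · simp only [hD]; rw [dif_pos (show m + (i : ℕ) - (j : ℕ) < m + 1 by omega)]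
    · rfl
  have hNU' : ∀ i j : Fin m, NU i j = if (i : ℕ) ≤ (j : ℕ) then N (m + (i : ℕ) - j) else 0 := by
    intro i j; rw [hNU i j]; split_ifs with h
    · simp only [hN]; rw [dif_pos (show m + (i : ℕ) - (j : ℕ) < m + 1 by omega)]
    · rfl
  ext i j
  have key : ∑ k : Fin m,
      (DL i k * NU k j - NL i k * DU k j - (NU i k * DL k j - DU i k * NL k j)) = 0 := by
    apply Finset.sum_ninvolution
      (g := fun k : Fin m => (⟨GSsig m i j k, GSsig_lt m i j k i.isLt j.isLt k.isLt⟩ : Fin m))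
    · intro k
      simp only [hDL', hNL', hDU', hNU']
      exact GSaux m i j k (GSsig m i j k) i.isLt j.isLt k.isLt
        (GSsig_lt m i j k i.isLt j.isLt k.isLt)
        (GSsig_rel m i j k i.isLt j.isLt k.isLt) D N
    · intro k hfk hgk
      apply hfk
      have h1 : (fun k : Fin m =>
          DL i k * NU k j - NL i k * DU k j - (NU i k * DL k j - DU i k * NL k j)) k
          + (fun k : Fin m =>
          DL i k * NU k j - NL i k * DU k j - (NU i k * DL k j - DU i k * NL k j))
            ⟨GSsig m i j k, GSsig_lt m i j k i.isLt j.isLt k.isLt⟩ = 0 := by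
        simp only [hDL', hNL', hDU', hNU']
        exact GSaux m i j k (GSsig m i j k) i.isLt j.isLt k.isLt
          (GSsig_lt m i j k i.isLt j.isLt k.isLt)
          (GSsig_rel m i j k i.isLt j.isLt k.isLt) D N
      rw [hgk] at h1
      simp only at h1 ⊢
      linarith
    · intro k; exact Finset.mem_univ _
    · intro k
      apply Fin.ext
      exact GSsig_sig m i j k i.isLt j.isLt k.isLt
  simp only [Matrix.sub_apply, Matrix.mul_apply]
  rw [Finset.sum_sub_distrib, Finset.sum_sub_distrib, Finset.sum_sub_distrib] at key
  linarith
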